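/- Let 1 < p < ∞ and let X be a Banach space. If the dual space X* has the p-Dunford–Pettis property, then X has the p-Dunford–Pettis property. -/

import Mathlib

open NormedSpace ENNReal

noncomputable section

/-- A sequence `x` in a normed space is weakly `p`-summable if
`∑ₙ |f (x n)|^p < ∞` for every continuous functional `f`. -/
def WeaklySummable (p : ℝ) {X : Type*} [NormedAddCommGroup X] [NormedSpace ℝ X]
    (x : ℕ → X) : Prop :=
  ∀ f : StrongDual ℝ X, Summable fun n => |f (x n)| ^ p

/-- `X` has the `p`-Dunford–Pettis property if for every weakly `p`-summable
sequence `x` in `X` and weakly `p`-summable sequence `f` in `X*`,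
`∑ₙ ∑ₖ |fₖ (xₙ)|^p < ∞`. -/
def PDPP (p : ℝ) (X : Type*) [NormedAddCommGroup X] [NormedSpace ℝ X] : Prop :=
  ∀ x : ℕ → X, WeaklySummable p x → ∀ f : ℕ → StrongDual ℝ X, WeaklySummable p f →
    Summable fun n => ∑' k, |f k (x n)| ^ p

theorem WeaklySummable.map {p : ℝ} {X Y : Type*} [NormedAddCommGroup X] [NormedSpace ℝ X]
    [NormedAddCommGroup Y] [NormedSpace ℝ Y] {x : ℕ → X} (hx : WeaklySummable p x)
    (T : X →L[ℝ] Y) : WeaklySummable p (fun n => T (x n)) :=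
  fun g => hx (g.comp T)

theorem summable_tsum_swap_of_nonneg {α β : Type*} {F : α → β → ℝ} (hF : ∀ n k, 0 ≤ F n k)
    (hcol : ∀ k, Summable fun n => F n k) (hsum : Summable fun k => ∑' n, F n k) :
    Summable fun n => ∑' k, F n k := by
  have hprod : Summable fun q : β × α => F q.2 q.1 :=
    (summable_prod_of_nonneg fun q => hF q.2 q.1).2 ⟨hcol, hsum⟩
  have hprod' : Summable fun q : α × β => F q.1 q.2 :=
    (Equiv.prodComm α β).summable_iff.mpr hprod
  exact ((summable_prod_of_nonneg fun q => hF q.1 q.2).1 hprod').2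

theorem stmt_12_general {X : Type*} [NormedAddCommGroup X] [NormedSpace ℝ X]
    (p : ℝ) (h : PDPP p (StrongDual ℝ X)) : PDPP p X := by
  intro x hx f hf
  -- The `p`-DPP of `X*`, applied to `f` and the canonical image of `x` in `X**`,
  -- gives summability of the iterated sums in the other order.
  have hswap : Summable fun k => ∑' n, |f k (x n)| ^ p := by
    simpa [NormedSpace.dual_def] using h f hf _ (hx.map (inclusionInDoubleDual ℝ X))
  exact summable_tsum_swap_of_nonneg (fun n k => by positivity) (fun k => hx (f k)) hswap

/-- If `X*` has the `p`-Dunford–Pettis property, then so does `X`. -/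
theorem stmt_12 {X : Type*} [NormedAddCommGroup X] [NormedSpace ℝ X] [CompleteSpace X]
    (p : ℝ) (hp : 1 < p) (h : PDPP p (StrongDual ℝ X)) : PDPP p X :=
  stmt_12_general p h
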